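/- For every n ≥ 3 there exists a ((3n)_4) point-circle configuration in the Euclidean plane with n-fold rotational symmetry: there exist 3n pairwise distinct points and 3n pairwise distinct circles (metric spheres of positive radius) in ℝ² such that every circle passes through exactly 4 of the points, every point lies on exactly 4 of the circles, and the set of points and the set of circles are each invariant under the rotation of the plane about a common center by angle 2π/n. -/

import Mathlib

/-!
Put `n` equally spaced points, at the angles `2πm/n`, on each of three concentric rings of
radii `x < 1 < 2`. For two rings of radii `ρ, ρ'` and each `k`, the circle centred on the ray
at angle `(2k+1)π/n`, at distance `(ρ + ρ')/(2 cos(π/n))` from the origin and with power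
`ρρ'` with respect to it, passes through the four points of these rings at the angles
`2πk/n` and `2π(k+1)/n`. A point at radius `r` whose angle differs from that ray by
`(2i-1)π/n` lies on the circle iff `r(ρ+ρ') cos((2i-1)π/n) = cos(π/n)(r² + ρρ')`. The cosines
of the odd multiples of `π/n` are `cos(π/n)` or at most `cos(3π/n)`, while for the third
ring the right-hand side divided by `r(ρ+ρ')` exceeds `cos(π/n)` if `r ∉ [ρ, ρ']`, and lies
strictly between `cos(3π/n)` and `cos(π/n)` for the middle ring once `x` is close to `1`.
So point `(a, m)` lies on circle `(c, k)` iff `a ≠ c` and `m ∈ {k, k+1}`: every point and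
every circle has four incidences, incidences separate points and circles, and the rotation
by `2π/n` shifts `m` and `k`.
-/

open Metric

/-- Rotation of the Euclidean plane about the point `O` by angle `θ`. -/
noncomputable def rotAbout (O : EuclideanSpace ℝ (Fin 2)) (θ : ℝ) :
    EuclideanSpace ℝ (Fin 2) → EuclideanSpace ℝ (Fin 2) := fun x =>
  (EuclideanSpace.equiv (Fin 2) ℝ).symm
    ![O 0 + Real.cos θ * (x 0 - O 0) - Real.sin θ * (x 1 - O 1),
      O 1 + Real.sin θ * (x 0 - O 0) + Real.cos θ * (x 1 - O 1)]

open Real Function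

local notation "ℝ²" => EuclideanSpace ℝ (Fin 2)

namespace PointCircleConfiguration

noncomputable def polar (r : ℝ) (θ : Real.Angle) : ℝ² := !₂[r * θ.cos, r * θ.sin]

lemma dist_polar_sq (r s : ℝ) (α β : Real.Angle) :
    dist (polar r α) (polar s β) ^ 2 = r ^ 2 + s ^ 2 - 2 * r * s * (α - β).cos := by
  rw [EuclideanSpace.dist_eq, sq_sqrt (by positivity), Fin.sum_univ_two, sub_eq_add_neg α,
    Real.Angle.cos_add, Real.Angle.cos_neg, Real.Angle.sin_neg]
  simp only [polar, Real.dist_eq, sq_abs, Fin.isValue, Matrix.cons_val_zero, Matrix.cons_val_one,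
    Matrix.cons_val_fin_one, mul_neg, sub_neg_eq_add]
  linear_combination r ^ 2 * α.cos_sq_add_sin_sq + s ^ 2 * β.cos_sq_add_sin_sq

lemma polar_mem_sphere_iff {ρ d q : ℝ} {α β : Real.Angle} (hq : q ≤ d ^ 2) :
    polar ρ α ∈ sphere (polar d β) √(d ^ 2 - q) ↔
      2 * ρ * d * (α - β).cos = ρ ^ 2 + q := by
  rw [mem_sphere, ← sq_eq_sq₀ dist_nonneg (sqrt_nonneg _), sq_sqrt (by linarith), dist_polar_sq]
  constructor <;> intro h <;> linarith

lemma rotAbout_zero_apply (θ : ℝ) (x : ℝ²) :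
    rotAbout 0 θ x = !₂[cos θ * x 0 - sin θ * x 1, sin θ * x 0 + cos θ * x 1] := by
  ext i; fin_cases i <;> simp [rotAbout]

lemma rotAbout_zero_polar (θ r : ℝ) (α : Real.Angle) :
    rotAbout 0 θ (polar r α) = polar r (α + θ) := by
  rw [rotAbout_zero_apply, polar, polar, Real.Angle.cos_add, Real.Angle.sin_add,
    Real.Angle.cos_coe, Real.Angle.sin_coe]
  ext i; fin_cases i <;>
    simp only [Fin.isValue, Fin.zero_eta, Fin.mk_one, Matrix.cons_val_zero, Matrix.cons_val_one,
      Matrix.cons_val_fin_one] <;> ring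

lemma dist_rotAbout_zero (θ : ℝ) (x y : ℝ²) :
    dist (rotAbout 0 θ x) (rotAbout 0 θ y) = dist x y := by
  simp only [rotAbout_zero_apply, EuclideanSpace.dist_eq, Fin.sum_univ_two, Real.dist_eq, sq_abs]
  congr 1
  simp only [Fin.isValue, Matrix.cons_val_zero, Matrix.cons_val_one, Matrix.cons_val_fin_one]
  linear_combination ((x 0 - y 0) ^ 2 + (x 1 - y 1) ^ 2) * sin_sq_add_cos_sq θ

lemma rotAbout_zero_rotAbout_zero_neg (θ : ℝ) (x : ℝ²) :
    rotAbout 0 θ (rotAbout 0 (-θ) x) = x := by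
  simp only [rotAbout_zero_apply, cos_neg, sin_neg]
  ext i; fin_cases i <;>
    simp only [Fin.isValue, neg_mul, sub_neg_eq_add, Matrix.cons_val_zero, Matrix.cons_val_one,
      Matrix.cons_val_fin_one, Fin.zero_eta, Fin.mk_one]
  · linear_combination x 0 * sin_sq_add_cos_sq θ
  · linear_combination x 1 * sin_sq_add_cos_sq θ

noncomputable def rotationIsometry (θ : ℝ) : ℝ² ≃ᵢ ℝ² where
  toFun := rotAbout 0 θ
  invFun := rotAbout 0 (-θ)
  left_inv x := by simpa using rotAbout_zero_rotAbout_zero_neg (-θ) x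
  right_inv := rotAbout_zero_rotAbout_zero_neg θ
  isometry_toFun := Isometry.of_dist_eq (dist_rotAbout_zero θ)

lemma image_rotAbout_zero_sphere (θ : ℝ) (c : ℝ²) (r : ℝ) :
    rotAbout 0 θ '' sphere c r = sphere (rotAbout 0 θ c) r :=
  (rotationIsometry θ).image_sphere c r

section Cosines

variable {n : ℕ}

lemma cos_pi_div_pos (hn : 3 ≤ n) : 0 < cos (π / n) := by
  have hn' : (3 : ℝ) ≤ n := by exact_mod_cast hn
  apply cos_pos_of_mem_Ioo
    ⟨by linarith [pi_pos, div_pos pi_pos (by linarith : (0 : ℝ) < n)], ?_⟩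
  rw [div_lt_iff₀ (by linarith)]
  nlinarith [pi_pos]

lemma cos_three_pi_div_lt (hn : 3 ≤ n) : cos (3 * π / n) < cos (π / n) := by
  have hn' : (3 : ℝ) ≤ n := by exact_mod_cast hn
  apply strictAntiOn_cos ⟨by positivity, ?_⟩ ⟨by positivity, ?_⟩ ?_
  · rw [div_le_iff₀ (by linarith)]; nlinarith [pi_pos]
  · rw [div_le_iff₀ (by linarith)]; nlinarith [pi_pos]
  · gcongr; linarith [pi_pos]

lemma cos_nat_mul_pi_div_le {j : ℕ} (h3 : 3 ≤ j) (hj : j + 3 ≤ 2 * n) :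
    cos (j * π / n) ≤ cos (3 * π / n) := by
  have hn : (0 : ℝ) < n := by exact_mod_cast (show 0 < n by omega)
  have first_half : ∀ j : ℕ, 3 ≤ j → j ≤ n → cos (j * π / n) ≤ cos (3 * π / n) := by
    intro j h3 hjn
    have h3' : (3 : ℝ) ≤ j := by exact_mod_cast h3
    have hjn' : (j : ℝ) ≤ n := by exact_mod_cast hjn
    apply cos_le_cos_of_nonneg_of_le_pi (by positivity)
    · rw [div_le_iff₀ hn]; nlinarith [pi_pos]
    · gcongr
  rcases le_or_gt j n with hjn | hjn
  · exact first_half j h3 hjn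
  · have hsymm : cos (j * π / n) = cos ((2 * n - j : ℕ) * π / n) := by
      rw [← cos_two_pi_sub, Nat.cast_sub (by omega)]
      congr 1
      field_simp
      push_cast
      ring
    rw [hsymm]
    exact first_half _ (by omega) (by omega)

lemma exists_inner_radius (hn : 3 ≤ n) :
    ∃ x : ℝ, 0 < x ∧ x < 1 ∧ cos (3 * π / n) * (x + 2) < cos (π / n) * (2 * x + 1) := by
  have hgap := cos_three_pi_div_lt hn
  have h₁ := cos_le_one (π / n)
  have h₃ := neg_one_le_cos (3 * π / n)
  refine ⟨1 - (cos (π / n) - cos (3 * π / n)) / 3, by linarith, by linarith, ?_⟩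
  nlinarith

end Cosines

noncomputable def gridAngle (n : ℕ) (m : Fin n) : Real.Angle :=
  m.val • ((2 * π / n : ℝ) : Real.Angle)

section GridAngle

variable {n : ℕ}

lemma nsmul_two_pi_div [NeZero n] : n • ((2 * π / n : ℝ) : Real.Angle) = 0 := by
  rw [← Real.Angle.coe_nsmul, nsmul_eq_mul, mul_div_cancel₀ _ (NeZero.ne (n : ℝ)),
    Real.Angle.coe_two_pi]

lemma gridAngle_add [NeZero n] (m k : Fin n) :
    gridAngle n (m + k) = gridAngle n m + gridAngle n k := by
  rw [gridAngle, gridAngle, gridAngle, Fin.val_add, ← nsmul_eq_mod_nsmul _ nsmul_two_pi_div,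
    add_nsmul]

lemma gridAngle_sub [NeZero n] (m k : Fin n) :
    gridAngle n (m - k) = gridAngle n m - gridAngle n k :=
  eq_sub_of_add_eq (by rw [← gridAngle_add, sub_add_cancel])

lemma gridAngle_one [NeZero n] : gridAngle n 1 = ((2 * π / n : ℝ) : Real.Angle) := by
  rw [gridAngle, Fin.val_one', ← nsmul_eq_mod_nsmul _ nsmul_two_pi_div, one_nsmul]

lemma cos_gridAngle_sub_half (i : Fin n) :
    (gridAngle n i - ↑(π / n)).cos = cos ((2 * i.val - 1) * π / n) := by
  rw [gridAngle, ← Real.Angle.coe_nsmul, ← Real.Angle.coe_sub, Real.Angle.cos_coe, nsmul_eq_mul]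
  congr 1
  ring

lemma cos_gridAngle_sub_half_of_val_le_one (i : Fin n) (hi : i.val ≤ 1) :
    (gridAngle n i - ↑(π / n)).cos = cos (π / n) := by
  rw [cos_gridAngle_sub_half]
  interval_cases h : i.val
  · rw [← cos_neg]; congr 1; push_cast; ring
  · congr 1; push_cast; ring

lemma cos_gridAngle_sub_half_le (i : Fin n) (hi : 2 ≤ i.val) :
    (gridAngle n i - ↑(π / n)).cos ≤ cos (3 * π / n) := by
  have := cos_nat_mul_pi_div_le (n := n) (j := 2 * i.val - 1) (by omega) (by omega)
  rwa [cos_gridAngle_sub_half, ← Nat.cast_ofNat, ← Nat.cast_mul, ← Nat.cast_one (R := ℝ),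
    ← Nat.cast_sub (by omega)]

end GridAngle

section Incidence

variable {n : ℕ} [NeZero n]

def Incident (p q : Fin 3 × Fin n) : Prop := p.1 ≠ q.1 ∧ (p.2 = q.2 ∨ p.2 = q.2 + 1)

lemma val_sub_le_one_iff (hn : 2 ≤ n) (m k : Fin n) :
    (m - k).val ≤ 1 ↔ m = k ∨ m = k + 1 := by
  have h1 : (1 : Fin n).val = 1 := by rw [Fin.val_one', Nat.mod_eq_of_lt hn]
  rw [Nat.le_one_iff_eq_zero_or_eq_one, Fin.val_eq_zero_iff, sub_eq_zero, ← h1, ← Fin.ext_iff,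
    sub_eq_iff_eq_add, add_comm 1 k]

lemma add_one_ne_self (hn : 2 ≤ n) (m : Fin n) : m + 1 ≠ m := by
  intro h
  have := congrArg Fin.val (add_eq_left.mp h)
  simp [Nat.mod_eq_of_lt hn] at this

lemma add_one_add_one_ne_self (hn : 3 ≤ n) (m : Fin n) : m + 1 + 1 ≠ m := by
  intro h
  have := congrArg Fin.val (add_eq_left.mp ((add_assoc m 1 1).symm.trans h))
  simp only [Fin.val_add, Fin.coe_ofNat_eq_mod, Nat.mod_eq_of_lt (show 1 < n by omega),
    Nat.reduceAdd, Nat.zero_mod] at this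
  rw [Nat.mod_eq_of_lt (by omega)] at this
  omega

lemma card_incident_left (hn : 2 ≤ n) (q : Fin 3 × Fin n) :
    Nat.card {p // Incident p q} = 4 := by
  classical
  obtain ⟨c, k⟩ := q
  have hset : (Finset.univ.filter fun p => Incident p (c, k)) =
      (Finset.univ.erase c) ×ˢ {k, k + 1} := by
    ext ⟨a, m⟩
    rw [Finset.mem_filter]
    simp [Incident]
  rw [Nat.card_eq_fintype_card, Fintype.card_subtype, hset, Finset.card_product,
    Finset.card_erase_of_mem (Finset.mem_univ _), Finset.card_pair (add_one_ne_self hn k).symm]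
  rfl

lemma card_incident_right (hn : 2 ≤ n) (p : Fin 3 × Fin n) :
    Nat.card {q // Incident p q} = 4 := by
  classical
  obtain ⟨a, m⟩ := p
  have hset : Finset.univ.filter (Incident (a, m)) = (Finset.univ.erase a) ×ˢ {m, m - 1} := by
    ext ⟨c, k⟩
    simp [Incident, eq_sub_iff_add_eq, eq_comm]
  rw [Nat.card_eq_fintype_card, Fintype.card_subtype, hset, Finset.card_product,
    Finset.card_erase_of_mem (Finset.mem_univ _), Finset.card_pair ?_]
  · rfl
  · intro h
    exact add_one_ne_self hn (m - 1) (by rw [sub_add_cancel, ← h])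

lemma eq_of_forall_incident_iff_left (hn : 3 ≤ n) {p p' : Fin 3 × Fin n}
    (h : ∀ q, Incident p q ↔ Incident p' q) : p = p' := by
  obtain ⟨a, m⟩ := p
  obtain ⟨a', m'⟩ := p'
  obtain rfl : a = a' := by
    by_contra hne
    exact ((h (a', m)).mp ⟨hne, Or.inl rfl⟩).1 rfl
  obtain ⟨c, hc⟩ := exists_ne a
  have h1 := ((h (c, m)).mp ⟨hc.symm, Or.inl rfl⟩).2
  have h2 := ((h (c, m - 1)).mp ⟨hc.symm, Or.inr (sub_add_cancel m 1).symm⟩).2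
  rw [sub_add_cancel] at h2
  obtain rfl | rfl := h1
  · rfl
  · exfalso
    obtain h2 | h2 := h2
    · exact add_one_add_one_ne_self hn (m - 1) (by rw [sub_add_cancel]; exact h2)
    · exact add_one_ne_self (by omega) m h2

lemma eq_of_forall_incident_iff_right (hn : 3 ≤ n) {q q' : Fin 3 × Fin n}
    (h : ∀ p, Incident p q ↔ Incident p q') : q = q' := by
  obtain ⟨c, k⟩ := q
  obtain ⟨c', k'⟩ := q'
  obtain rfl : c = c' := by
    by_contra hne
    exact ((h (c, k')).mpr ⟨hne, Or.inl rfl⟩).1 rfl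
  obtain ⟨a, ha⟩ := exists_ne c
  have h1 := ((h (a, k)).mp ⟨ha, Or.inl rfl⟩).2
  have h2 := ((h (a, k + 1)).mp ⟨ha, Or.inr rfl⟩).2
  obtain rfl | rfl := h1
  · rfl
  · exfalso
    obtain h2 | h2 := h2
    · exact add_one_add_one_ne_self hn k' h2
    · exact add_one_ne_self (by omega) k' (add_right_cancel h2)

end Incidence

section Configuration

variable (n : ℕ) (x : ℝ)

noncomputable def radius : Fin 3 → ℝ := ![x, 1, 2]

-- A circle of type `c` passes through the two rings other than ring `c`; `pairSum x c` and
-- `pairProd x c` are the sum and the product of their radii.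
noncomputable def pairSum : Fin 3 → ℝ := ![3, x + 2, x + 1]

noncomputable def pairProd : Fin 3 → ℝ := ![2, 2 * x, x]

noncomputable def centerDist (c : Fin 3) : ℝ := pairSum x c / (2 * cos (π / n))

noncomputable def circleRadius (c : Fin 3) : ℝ := √(centerDist n x c ^ 2 - pairProd x c)

noncomputable def point (p : Fin 3 × Fin n) : ℝ² := polar (radius x p.1) (gridAngle n p.2)

noncomputable def center (q : Fin 3 × Fin n) : ℝ² :=
  polar (centerDist n x q.1) (gridAngle n q.2 + ↑(π / n))

noncomputable def circle (q : Fin 3 × Fin n) : Set ℝ² :=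
  sphere (center n x q) (circleRadius n x q.1)

end Configuration

section Radii

variable {x : ℝ}

lemma radius_pos (hx : 0 < x) (a : Fin 3) : 0 < radius x a := by
  fin_cases a <;> simp [radius, hx]

lemma radius_sq_add_pairProd {a c : Fin 3} (h : a ≠ c) :
    radius x a ^ 2 + pairProd x c = radius x a * pairSum x c := by
  fin_cases a <;> fin_cases c <;>
    simp_all only [radius, pairSum, pairProd, ne_eq, not_true_eq_false,
      Fin.isValue, Fin.zero_eta, Fin.mk_one, Fin.reduceFinMk, Matrix.cons_val, Matrix.cons_val_zero,
      Matrix.cons_val_one] <;> ring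

lemma radius_mul_pairSum_ne (hx : x < 1) (c : Fin 3) :
    radius x c * pairSum x c ≠ radius x c ^ 2 + pairProd x c := by
  fin_cases c <;>
    simp only [radius, pairSum, pairProd, ne_eq,
      Fin.isValue, Fin.zero_eta, Fin.mk_one, Fin.reduceFinMk, Matrix.cons_val, Matrix.cons_val_zero,
      Matrix.cons_val_one] <;> nlinarith

lemma radius_mul_pairSum_mul_lt {c₁ c₃ : ℝ} (hc : c₃ < c₁) (hc₁ : 0 < c₁) (hx0 : 0 < x)
    (hx1 : x < 1) (hx : c₃ * (x + 2) < c₁ * (2 * x + 1)) (c : Fin 3) :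
    radius x c * pairSum x c * c₃ < c₁ * (radius x c ^ 2 + pairProd x c) := by
  fin_cases c <;>
    simp only [radius, pairSum, pairProd,
      Fin.isValue, Fin.zero_eta, Fin.mk_one, Fin.reduceFinMk, Matrix.cons_val, Matrix.cons_val_zero,
      Matrix.cons_val_one]
  · nlinarith [mul_pos hx0 (sub_pos.mpr hc),
      mul_pos hc₁ (mul_pos (sub_pos.mpr hx1) (by linarith : (0 : ℝ) < 2 - x))]
  · linarith
  · nlinarith [mul_pos hc₁ (by linarith : (0 : ℝ) < 2 - x),
      mul_pos (by linarith : (0 : ℝ) < x + 1) (sub_pos.mpr hc)]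

lemma pairProd_pos (hx : 0 < x) (c : Fin 3) : 0 < pairProd x c := by
  fin_cases c <;>
    simp only [pairProd,
      Fin.isValue, Fin.zero_eta, Fin.mk_one, Fin.reduceFinMk, Matrix.cons_val, Matrix.cons_val_zero,
      Matrix.cons_val_one] <;> linarith

lemma pairSum_pos (hx : 0 < x) (c : Fin 3) : 0 < pairSum x c := by
  fin_cases c <;>
    simp only [pairSum,
      Fin.isValue, Fin.zero_eta, Fin.mk_one, Fin.reduceFinMk, Matrix.cons_val, Matrix.cons_val_zero,
      Matrix.cons_val_one] <;> linarith

lemma four_mul_pairProd_lt_sq (hx0 : 0 < x) (hx1 : x < 1) (c : Fin 3) :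
    4 * pairProd x c < pairSum x c ^ 2 := by
  fin_cases c <;>
    simp only [pairSum, pairProd,
      Fin.isValue, Fin.zero_eta, Fin.mk_one, Fin.reduceFinMk, Matrix.cons_val, Matrix.cons_val_zero,
      Matrix.cons_val_one] <;> nlinarith

end Radii

section Circles

variable {n : ℕ} {x : ℝ}

lemma pairProd_lt_centerDist_sq (hn : 3 ≤ n) (hx0 : 0 < x) (hx1 : x < 1) (c : Fin 3) :
    pairProd x c < centerDist n x c ^ 2 := by
  have h₁ := cos_pi_div_pos hn
  have hsq : cos (π / n) ^ 2 ≤ 1 := by nlinarith [cos_le_one (π / n)]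
  have := four_mul_pairProd_lt_sq hx0 hx1 c
  rw [centerDist, div_pow, lt_div_iff₀ (by positivity)]
  nlinarith [mul_le_mul_of_nonneg_left hsq (pairProd_pos hx0 c).le]

lemma circleRadius_pos (hn : 3 ≤ n) (hx0 : 0 < x) (hx1 : x < 1) (c : Fin 3) :
    0 < circleRadius n x c :=
  sqrt_pos.mpr (sub_pos.mpr (pairProd_lt_centerDist_sq hn hx0 hx1 c))

variable [NeZero n]

lemma point_mem_circle_iff (hn : 3 ≤ n) (hx0 : 0 < x) (hx1 : x < 1)
    (hx : cos (3 * π / n) * (x + 2) < cos (π / n) * (2 * x + 1)) (p q : Fin 3 × Fin n) :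
    point n x p ∈ circle n x q ↔ Incident p q := by
  obtain ⟨a, m⟩ := p
  obtain ⟨c, k⟩ := q
  have h₁ := cos_pi_div_pos hn
  have hgap := cos_three_pi_div_lt hn
  have hL : 0 < radius x a * pairSum x c := mul_pos (radius_pos hx0 a) (pairSum_pos hx0 c)
  have hmem : point n x (a, m) ∈ circle n x (c, k) ↔
      radius x a * pairSum x c * (gridAngle n (m - k) - ↑(π / n)).cos =
        cos (π / n) * (radius x a ^ 2 + pairProd x c) := by
    rw [circle, circleRadius, point, center,
      polar_mem_sphere_iff (pairProd_lt_centerDist_sq hn hx0 hx1 c).le, gridAngle_sub,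
      sub_add_eq_sub_sub, centerDist]
    constructor <;> intro h
    · field_simp at h; linarith
    · field_simp; linarith
  rw [hmem, Incident, ← val_sub_le_one_iff (by omega)]
  by_cases hac : a = c
  · subst hac
    simp only [ne_eq, not_true_eq_false, false_and, iff_false]
    rcases le_or_gt (m - k).val 1 with hi | hi
    · rw [cos_gridAngle_sub_half_of_val_le_one _ hi, mul_comm]
      exact fun h => radius_mul_pairSum_ne hx1 a (mul_left_cancel₀ h₁.ne' h)
    · have hcos := mul_le_mul_of_nonneg_left (cos_gridAngle_sub_half_le _ hi) hL.le
      have := radius_mul_pairSum_mul_lt hgap h₁ hx0 hx1 hx a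
      exact fun h => by linarith
  · rw [radius_sq_add_pairProd hac, mul_comm (cos _), mul_right_inj' hL.ne']
    simp only [ne_eq, hac, not_false_eq_true, true_and]
    rcases le_or_gt (m - k).val 1 with hi | hi
    · simp [hi, cos_gridAngle_sub_half_of_val_le_one _ hi]
    · simp only [hi.not_ge, iff_false]
      exact (cos_gridAngle_sub_half_le _ hi).trans_lt hgap |>.ne

lemma point_injective (hn : 3 ≤ n) (hx0 : 0 < x) (hx1 : x < 1)
    (hx : cos (3 * π / n) * (x + 2) < cos (π / n) * (2 * x + 1)) : Injective (point n x) :=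
  fun _ _ h => eq_of_forall_incident_iff_left hn fun q => by
    rw [← point_mem_circle_iff hn hx0 hx1 hx, ← point_mem_circle_iff hn hx0 hx1 hx, h]

lemma circle_injective (hn : 3 ≤ n) (hx0 : 0 < x) (hx1 : x < 1)
    (hx : cos (3 * π / n) * (x + 2) < cos (π / n) * (2 * x + 1)) : Injective (circle n x) :=
  fun _ _ h => eq_of_forall_incident_iff_right hn fun p => by
    rw [← point_mem_circle_iff hn hx0 hx1 hx, ← point_mem_circle_iff hn hx0 hx1 hx, h]

lemma rotAbout_point (p : Fin 3 × Fin n) :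
    rotAbout 0 (2 * π / n) (point n x p) = point n x (p.1, p.2 + 1) := by
  rw [point, point, rotAbout_zero_polar, gridAngle_add, gridAngle_one]

lemma image_rotAbout_circle (q : Fin 3 × Fin n) :
    rotAbout 0 (2 * π / n) '' circle n x q = circle n x (q.1, q.2 + 1) := by
  rw [circle, circle, image_rotAbout_zero_sphere, center, center, rotAbout_zero_polar,
    gridAngle_add, gridAngle_one, add_right_comm]

end Circles

end PointCircleConfiguration

lemma Set.image_range_eq_range_of_semiconj {ι α : Type*} {g : α → α} {f : ι → α}
    {σ : ι → ι} (hσ : Surjective σ) (h : ∀ i, g (f i) = f (σ i)) : g '' range f = range f := by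
  rw [← range_comp, show g ∘ f = f ∘ σ from funext h, hσ.range_comp]

open PointCircleConfiguration in
/-- For every `n ≥ 3` there is a `((3n)_4)` point-circle configuration in the Euclidean
plane with `n`-fold rotational symmetry: `3n` distinct points and `3n` distinct circles
such that every circle passes through exactly 4 of the points, every point lies on
exactly 4 of the circles, and both the set of points and the set of circles are invariant
under the rotation about a common centre by angle `2π/n`. -/
theorem exists_3n_4_configuration_with_rotational_symmetry (n : ℕ) (hn : 3 ≤ n) :
    ∃ (O : EuclideanSpace ℝ (Fin 2))
      (p : Fin (3 * n) → EuclideanSpace ℝ (Fin 2))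
      (c : Fin (3 * n) → EuclideanSpace ℝ (Fin 2)) (r : Fin (3 * n) → ℝ),
      Function.Injective p ∧
      (∀ j, 0 < r j) ∧
      Function.Injective (fun j => sphere (c j) (r j)) ∧
      (∀ j, Nat.card {i : Fin (3 * n) // p i ∈ sphere (c j) (r j)} = 4) ∧
      (∀ i, Nat.card {j : Fin (3 * n) // p i ∈ sphere (c j) (r j)} = 4) ∧
      rotAbout O (2 * Real.pi / n) '' Set.range p = Set.range p ∧
      (Set.image (rotAbout O (2 * Real.pi / n))) ''
          (Set.range fun j => sphere (c j) (r j))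
        = Set.range fun j => sphere (c j) (r j) := by
  have : NeZero n := ⟨by omega⟩
  obtain ⟨x, hx0, hx1, hx⟩ := exists_inner_radius hn
  have hmem := point_mem_circle_iff hn hx0 hx1 hx
  let e : Fin (3 * n) ≃ Fin 3 × Fin n := finProdFinEquiv.symm
  have hshift : Surjective (Prod.map id (· + 1) : Fin 3 × Fin n → Fin 3 × Fin n) :=
    surjective_id.prodMap (add_right_surjective 1)
  refine ⟨0, point n x ∘ e, center n x ∘ e, fun j => circleRadius n x (e j).1,
    (point_injective hn hx0 hx1 hx).comp e.injective, fun j => circleRadius_pos hn hx0 hx1 _,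
    (circle_injective hn hx0 hx1 hx).comp e.injective, fun j => ?_, fun i => ?_, ?_, ?_⟩
  · rw [← card_incident_left (by omega) (e j)]
    exact Nat.card_congr (e.subtypeEquiv fun i => hmem _ _)
  · rw [← card_incident_right (by omega) (e i)]
    exact Nat.card_congr (e.subtypeEquiv fun j => hmem _ _)
  · rw [e.surjective.range_comp]
    exact Set.image_range_eq_range_of_semiconj hshift rotAbout_point
  · change _ '' Set.range (circle n x ∘ e) = Set.range (circle n x ∘ e)
    rw [e.surjective.range_comp]
    exact Set.image_range_eq_range_of_semiconj hshift image_rotAbout_circle
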